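/- arXiv:1302.6303 — 4 statements merged into one kernel-verified Lean document; each statement's English description precedes it below -/
import Mathlib

section
/- Let α > 0 and t, h ∈ ℝ, and let u : ℝ → ℝ be a polynomial function of degree at most 2, i.e. u x = a + b*x + c*x^2 for some real a, b, c. Then the generalized leapfrog predictor with step ratio α is exact for u: u t + (1 + α) * h * (deriv u t) - α^2 * (u t - u (t - h/α)) = u (t + h). -/
/-- The generalized leapfrog predictor with step ratio `α` is exact for polynomials of
degree at most 2. -/
theorem leapfrog_predictor_exact_on_quadratics (α t h a b c : ℝ) (hα : 0 < α)
    (u : ℝ → ℝ) (hu : ∀ x, u x = a + b * x + c * x ^ 2) :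
    u t + (1 + α) * h * (deriv u t) - α ^ 2 * (u t - u (t - h / α)) = u (t + h) := by
  have hue : u = fun x => a + b * x + c * x ^ 2 := funext hu
  have hd : deriv u t = b + 2 * c * t := by
    rw [hue]
    have : HasDerivAt (fun x : ℝ => a + b * x + c * x ^ 2) (0 + b * 1 + c * (2 * t)) t := by
      apply HasDerivAt.add
      apply HasDerivAt.add (hasDerivAt_const t a) ((hasDerivAt_id t).const_mul b)
      simpa using ((hasDerivAt_pow 2 t).const_mul c)
    rw [this.deriv]; ring
  rw [hd, hu, hu, hu]
  field_simp
  ring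
end

section
/- Let u : ℝ → ℝ be three times continuously differentiable (ContDiff ℝ 3), let t ∈ ℝ and α > 0. For h > 0 define the generalized leapfrog predictor p h = u t + (1 + α) * h * (deriv u t) - α^2 * (u t - u (t - h/α)). Then (fun h => (p h - u (t + h)) / h^3) tends to -(1 + 1/α) * (iteratedDeriv 3 u t) / 6 as h → 0 within (0, ∞). Equivalently, in the paper's notation with Δtₙ = h and Δtₙ₋₁ = h/α, the predictor local error satisfies u^p_{n+1} − u(t_{n+1}) ≈ −(1 + Δtₙ₋₁/Δtₙ)·(Δtₙ³/6)·u⁽³⁾. -/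
/-!
Expand `u` to third order about `t` at the two nodes `t + h` and `t - h / α`. The weights of the
predictor are exactly those that cancel the constant, linear and quadratic Taylor terms, so the
error is `-(1 + 1/α) h³ u'''(t) / 6` plus `α²` times the remainder at `-h/α` minus the remainder
at `h`, both `o(h³)`.
-/

open Filter Asymptotics Topology

noncomputable def cubicTaylorRemainder (u : ℝ → ℝ) (t s : ℝ) : ℝ :=
  u (t + s) - (u t + s * deriv u t + s ^ 2 / 2 * iteratedDeriv 2 u t
    + s ^ 3 / 6 * iteratedDeriv 3 u t)

theorem cubicTaylorRemainder_isLittleO {u : ℝ → ℝ} (hu : ContDiff ℝ 3 u) (t : ℝ) :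
    cubicTaylorRemainder u t =o[𝓝 0] fun s ↦ s ^ 3 := by
  have hshift : Tendsto (t + ·) (𝓝 0) (𝓝 t) := by
    simpa using (continuous_const_add t).tendsto 0
  refine ((taylor_isLittleO_univ hu).comp_tendsto hshift).congr (fun s ↦ ?_) (fun s ↦ ?_)
  · simp only [cubicTaylorRemainder, Function.comp_apply, taylor_within_apply,
      Finset.sum_range_succ, Finset.sum_range_zero, iteratedDerivWithin_univ, iteratedDeriv_zero,
      iteratedDeriv_one, smul_eq_mul, add_sub_cancel_left]
    norm_num [Nat.factorial]
    ring
  · simp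

theorem cubicTaylorRemainder_comp_mul_isLittleO {u : ℝ → ℝ} (hu : ContDiff ℝ 3 u) (t c : ℝ) :
    (fun h ↦ cubicTaylorRemainder u t (c * h)) =o[𝓝 0] fun h ↦ h ^ 3 := by
  have hscale : Tendsto (c * ·) (𝓝 0) (𝓝 0) := by
    simpa using (continuous_const_mul c).tendsto 0
  refine ((cubicTaylorRemainder_isLittleO hu t).comp_tendsto hscale).trans_isBigO ?_
  simpa [Function.comp_def, mul_pow] using isBigO_const_mul_self (c ^ 3) (fun h : ℝ ↦ h ^ 3) _

noncomputable def leapfrogPredictor (u : ℝ → ℝ) (t α h : ℝ) : ℝ :=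
  u t + (1 + α) * h * deriv u t - α ^ 2 * (u t - u (t - h / α))

theorem leapfrogPredictor_sub_eq (u : ℝ → ℝ) (t : ℝ) {α : ℝ} (hα : α ≠ 0) (h : ℝ) :
    leapfrogPredictor u t α h - u (t + h) =
      -(1 + 1 / α) * iteratedDeriv 3 u t / 6 * h ^ 3
        + (α ^ 2 * cubicTaylorRemainder u t (-α⁻¹ * h) - cubicTaylorRemainder u t h) := by
  simp only [leapfrogPredictor, cubicTaylorRemainder, ← sub_eq_add_neg, neg_mul, div_eq_inv_mul,
    mul_comm α⁻¹ h]
  field_simp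
  ring

theorem tendsto_leapfrogPredictor_sub_div_pow_three {u : ℝ → ℝ} (hu : ContDiff ℝ 3 u)
    (t : ℝ) {α : ℝ} (hα : α ≠ 0) :
    Tendsto (fun h ↦ (leapfrogPredictor u t α h - u (t + h)) / h ^ 3) (𝓝[≠] 0)
      (𝓝 (-(1 + 1 / α) * iteratedDeriv 3 u t / 6)) := by
  have hrem : (fun h ↦ α ^ 2 * cubicTaylorRemainder u t (-α⁻¹ * h)
      - cubicTaylorRemainder u t h) =o[𝓝 0] fun h ↦ h ^ 3 :=
    ((cubicTaylorRemainder_comp_mul_isLittleO hu t _).const_mul_left _).sub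
      (cubicTaylorRemainder_isLittleO hu t)
  have hlim := (tendsto_const_nhds (x := -(1 + 1 / α) * iteratedDeriv 3 u t / 6)).add
    (hrem.tendsto_div_nhds_zero.mono_left (nhdsWithin_le_nhds (s := {0}ᶜ)))
  rw [add_zero] at hlim
  refine hlim.congr' (eventually_nhdsWithin_of_forall fun h (hh : h ≠ 0) ↦ ?_)
  dsimp only
  rw [leapfrogPredictor_sub_eq u t hα, add_div, mul_div_cancel_right₀ _ (pow_ne_zero 3 hh)]

/-- Leading-order local error of the generalized leapfrog predictor:
`(p h - u (t+h)) / h³ → -(1 + 1/α) · u⁽³⁾(t) / 6` as `h → 0⁺`. -/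
theorem leapfrog_local_error_asymptotics (u : ℝ → ℝ) (hu : ContDiff ℝ 3 u)
    (t α : ℝ) (hα : 0 < α) :
    Filter.Tendsto
      (fun h : ℝ =>
        ((u t + (1 + α) * h * (deriv u t) - α ^ 2 * (u t - u (t - h / α)))
          - u (t + h)) / h ^ 3)
      (nhdsWithin 0 (Set.Ioi 0))
      (nhds (-(1 + 1 / α) * (iteratedDeriv 3 u t) / 6)) :=
  (tendsto_leapfrogPredictor_sub_div_pow_three hu t hα.ne').mono_left
    (nhdsWithin_mono _ fun _ hh ↦ (Set.mem_Ioi.mp hh).ne')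
end

section
/- Let u : ℝ → ℝ be three times continuously differentiable (ContDiff ℝ 3), let t ∈ ℝ and α > 0. For h > 0 define the BDF2 value v h = ((1 + α)/(1 + 2*α)) * ((1 + α) * u t - (α^2/(1 + α)) * u (t - h/α) + h * deriv u (t + h)) and the generalized leapfrog predictor p h = u t + (1 + α) * h * (deriv u t) - α^2 * (u t - u (t - h/α)). Then (fun h => (v h - p h) / h^3) tends to ((α + 1) * (3*α + 2) / (6 * α * (2*α + 1))) * iteratedDeriv 3 u t as h → 0 within (0, ∞). -/
open Filter Asymptotics Finset Topology
open scoped Nat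

/-! With `s = -h/α`, the difference `v h - p h` is `(1+α)/(1+2α)` times
`-2α² (u (t+s) - u t) + h u'(t+h) - (1+2α) h u'(t)`. Expanding `u` to order three and `u'` to
order two around `t`, the terms in `h` and `h²` cancel, the `h³` terms add up to
`(1/(3α) + 1/2) u'''(t)`, and the Taylor remainders contribute `o(h³)`. -/

section Taylor

variable {E : Type*} [NormedAddCommGroup E] [NormedSpace ℝ E]

noncomputable def taylorRemainder (f : ℝ → E) (n : ℕ) (x₀ s : ℝ) : E :=
  f (x₀ + s) - ∑ k ∈ range (n + 1), (s ^ k / k !) • iteratedDeriv k f x₀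

theorem ContDiff.taylorRemainder_isLittleO {f : ℝ → E} {n : ℕ} (hf : ContDiff ℝ n f) (x₀ : ℝ) :
    taylorRemainder f n x₀ =o[𝓝 0] fun s => s ^ n := by
  have hshift : Tendsto (x₀ + ·) (𝓝 0) (𝓝 x₀) := by
    simpa using (continuous_const_add x₀).tendsto 0
  convert (taylor_isLittleO_univ hf).comp_tendsto hshift using 1
  · ext s
    simp [taylorRemainder, taylor_within_apply, iteratedDerivWithin_univ, div_eq_inv_mul]
  · ext s
    simp

end Taylor

theorem tendsto_div_of_isLittleO_sub_mul {ι : Type*} {l : Filter ι} {f g : ι → ℝ} {L : ℝ}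
    (h : (fun x => f x - L * g x) =o[l] g) (hg : ∀ᶠ x in l, g x ≠ 0) :
    Tendsto (fun x => f x / g x) l (𝓝 L) := by
  have := (h.tendsto_div_nhds_zero).add_const L
  rw [zero_add] at this
  refine this.congr' ?_
  filter_upwards [hg] with x hx
  field_simp
  ring

theorem bdf2_sub_leapfrog_eq_taylorRemainder (u : ℝ → ℝ) (t α h : ℝ) (hα : 0 < α) :
    (((1 + α) / (1 + 2 * α)) *
        ((1 + α) * u t - (α ^ 2 / (1 + α)) * u (t - h / α) + h * deriv u (t + h)))
      - (u t + (1 + α) * h * (deriv u t) - α ^ 2 * (u t - u (t - h / α)))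
      - ((α + 1) * (3 * α + 2) / (6 * α * (2 * α + 1))) * iteratedDeriv 3 u t * h ^ 3
      = (1 + α) / (1 + 2 * α) *
          (-2 * α ^ 2 * taylorRemainder u 3 t (-h / α) + h * taylorRemainder (deriv u) 2 t h) := by
  simp only [taylorRemainder, sum_range_succ, sum_range_zero, iteratedDeriv_succ',
    iteratedDeriv_zero, smul_eq_mul, ← sub_eq_add_neg, neg_div]
  norm_num [Nat.factorial]
  field_simp
  ring

/-- Leading-order asymptotics of the corrector-minus-predictor difference:
`(v h - p h) / h³ → ((α+1)(3α+2) / (6α(2α+1))) · u⁽³⁾(t)` as `h → 0⁺`. -/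
theorem bdf2_minus_leapfrog_asymptotics (u : ℝ → ℝ) (hu : ContDiff ℝ 3 u)
    (t α : ℝ) (hα : 0 < α) :
    Filter.Tendsto
      (fun h : ℝ =>
        ((((1 + α) / (1 + 2 * α)) *
            ((1 + α) * u t - (α ^ 2 / (1 + α)) * u (t - h / α) + h * deriv u (t + h)))
          - (u t + (1 + α) * h * (deriv u t) - α ^ 2 * (u t - u (t - h / α)))) / h ^ 3)
      (nhdsWithin 0 (Set.Ioi 0))
      (nhds (((α + 1) * (3 * α + 2) / (6 * α * (2 * α + 1))) * iteratedDeriv 3 u t)) := by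
  have hscale : Tendsto (fun h : ℝ => -h / α) (𝓝 0) (𝓝 0) := by
    simpa using (continuous_neg.div_const α).tendsto 0
  have hR₃ : (fun h => taylorRemainder u 3 t (-h / α)) =o[𝓝 0] fun h : ℝ => h ^ 3 := by
    have hpow : (fun h : ℝ => (-h / α) ^ 3) = fun h => -(α ^ 3)⁻¹ * h ^ 3 := by
      ext h; field_simp
    refine ((hu.taylorRemainder_isLittleO t).comp_tendsto hscale).trans_isBigO ?_
    simpa only [Function.comp_def, hpow] using isBigO_const_mul_self _ _ _
  have hR₂ : (fun h => h * taylorRemainder (deriv u) 2 t h) =o[𝓝 0] fun h : ℝ => h ^ 3 := by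
    refine ((isBigO_refl id (𝓝 0)).mul_isLittleO
      ((hu.deriv' (n := 2)).taylorRemainder_isLittleO t)).congr_right fun h => ?_
    simp only [id, pow_succ' h 2]
  refine tendsto_div_of_isLittleO_sub_mul ?_
    (eventually_mem_nhdsWithin.mono fun h (hh : 0 < h) => pow_ne_zero 3 hh.ne')
  simp_rw [bdf2_sub_leapfrog_eq_taylorRemainder u t α _ hα]
  exact (((hR₃.const_mul_left _).add hR₂).const_mul_left _).mono nhdsWithin_le_nhds
end

section
/- Let n : ℕ, let A_E, A_T, S, M be matrices in Matrix (Fin n) (Fin n) ℝ, and let β ∈ ℝ. Define the block matrices (via Matrix.fromBlocks): L = fromBlocks (1 + β•S - β•A_E) (-(β•(S*M))) (-(β•S)) (1 + β•(S*M) - β•A_T), P₁ = fromBlocks (1 - β•A_E) 0 0 (1 - β•A_T), and P₂ = fromBlocks (1 + β•S) (-(β•(S*M))) (-(β•S)) (1 + β•(S*M)). Then P₁ * P₂ = L + β^2 • fromBlocks (-(A_E*S)) (A_E*S*M) (A_T*S) (-(A_T*S*M)). In particular the splitting error P₁P₂ − L is proportional to β², i.e. second order in the timestep. -/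
open Matrix

/-- The multiplicative splitting error of the physics-based preconditioner is second order
in the scaled timestep `β`: `P₁ * P₂ = L + β² • (error block matrix)`. -/
theorem precond_splitting_second_order (n : ℕ)
    (A_E A_T S M : Matrix (Fin n) (Fin n) ℝ) (β : ℝ) :
    (Matrix.fromBlocks (1 - β • A_E) 0 0 (1 - β • A_T)) *
      (Matrix.fromBlocks (1 + β • S) (-(β • (S * M))) (-(β • S)) (1 + β • (S * M))) =
    (Matrix.fromBlocks (1 + β • S - β • A_E) (-(β • (S * M)))
        (-(β • S)) (1 + β • (S * M) - β • A_T)) +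
      β ^ 2 • Matrix.fromBlocks (-(A_E * S)) (A_E * S * M)
        (A_T * S) (-(A_T * S * M)) := by
  rw [Matrix.fromBlocks_multiply, Matrix.fromBlocks_smul, Matrix.fromBlocks_add]
  rw [Matrix.fromBlocks_inj]
  refine ⟨?_, ?_, ?_, ?_⟩ <;>
    simp only [Matrix.mul_add, Matrix.add_mul, Matrix.mul_smul, Matrix.smul_mul, smul_smul,
      Matrix.mul_assoc, sq, smul_add, smul_neg, neg_smul, one_smul, Matrix.one_mul,
      Matrix.mul_one, smul_sub, sub_mul, Matrix.zero_mul, Matrix.mul_zero, smul_zero,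
      add_zero, zero_add, neg_neg, Matrix.mul_neg, Matrix.neg_mul] <;>
    abel
end
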